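/- arXiv:2605.09077 — 5 statements merged into one kernel-verified Lean document; each statement's English description precedes it below -/
import Mathlib

section
/- Every finite linear band is in DA. That is, let M be a finite monoid such that every element of M is idempotent (x*x = x for all x) and for all x, y ∈ M either x*y*x = x or y*x*y = y. Then for all e, s ∈ M, if e ≤_J s (i.e. there exist u, v ∈ M with e = u*s*v), then e*s*e = e. -/
/-- Green's `J`-preorder: `x ≤_J y` iff `x = u * y * v` for some `u v`. -/
def leJ {M : Type*} [Monoid M] (x y : M) : Prop := ∃ u v : M, x = u * y * v

/-- Every finite linear band is in **DA**: if `M` is a finite monoid in which every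
element is idempotent and, for all `x y`, `x*y*x = x` or `y*x*y = y`, then for all
`e s : M` with `e ≤_J s` one has `e*s*e = e`. -/
theorem linearBand_mem_DA {M : Type*} [Monoid M] [Finite M]
    (hband : ∀ x : M, x * x = x)
    (hlin : ∀ x y : M, x * y * x = x ∨ y * x * y = y) :
    ∀ e s : M, leJ e s → e * s * e = e := by
  rintro e s ⟨u, v, h⟩
  rcases hlin e s with h1 | h2
  · exact h1
  rcases hlin s v with h3 | h4
  · -- s*v*s = s
    calc e * s * e = u * (s * v * s) * (u * s * v) := by rw [h]; simp only [mul_assoc]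
      _ = (u * s) * (u * s) * v := by rw [h3]; simp only [mul_assoc]
      _ = u * s * v := by rw [hband]
      _ = e := h.symm
  · -- v*s*v = v
    have h5 : e * s * v = e := by
      calc e * s * v = u * s * (v * s * v) := by rw [h]; simp only [mul_assoc]
        _ = u * s * v := by rw [h4]
        _ = e := h.symm
    calc e * s * e = e * s * (e * s * v) := by rw [h5]
      _ = e * (s * e * s) * v := by simp only [mul_assoc]
      _ = e * s * v := by rw [h2]
      _ = e := h5
end

section
/- In a finite band, any two J-equivalent elements e and s satisfy e*s*e = e. That is, let M be a finite monoid in which every element is idempotent (x*x = x for all x). If e, s ∈ M satisfy e ≤_J s and s ≤_J e, then e*s*e = e. -/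
/-- In a finite band, any two `J`-equivalent elements `e` and `s` satisfy `e*s*e = e`. -/
theorem band_J_equiv_sandwich {M : Type*} [Monoid M] [Finite M]
    (hband : ∀ x : M, x * x = x) :
    ∀ e s : M, leJ e s → leJ s e → e * s * e = e := by
  rintro e s ⟨u, v, hus⟩ ⟨p, q, hpe⟩
  have key : e = (u*p) * e * (q*v) := by
    calc e = u*s*v := hus
    _ = u*(p*e*q)*v := by rw [hpe]
    _ = (u*p)*e*(q*v) := by simp only [mul_assoc]
  have ha : (u*p) * e = e := by
    calc (u*p)*e = (u*p)*((u*p)*e*(q*v)) := by rw [key.symm]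
    _ = ((u*p)*(u*p))*e*(q*v) := by simp only [mul_assoc]
    _ = (u*p)*e*(q*v) := by rw [hband]
    _ = e := key.symm
  have hb : e * (q*v) = e := by
    calc e*(q*v) = ((u*p)*e*(q*v))*(q*v) := by rw [key.symm]
    _ = (u*p)*e*((q*v)*(q*v)) := by simp only [mul_assoc]
    _ = (u*p)*e*(q*v) := by rw [hband]
    _ = e := key.symm
  calc e * s * e
      = (e*p)*((e*q)*e) := by rw [hpe]; simp only [mul_assoc]
    _ = (e*p)*((e*q)*(e*(q*v))) := by rw [hb]
    _ = (e*p)*(((e*q)*(e*q))*v) := by simp only [mul_assoc]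
    _ = (e*p)*((e*q)*v) := by rw [hband]
    _ = (e*p)*(e*(q*v)) := by simp only [mul_assoc]
    _ = (e*p)*e := by rw [hb]
    _ = (((u*p)*e)*p)*e := by rw [ha]
    _ = u*((p*e)*(p*e)) := by simp only [mul_assoc]
    _ = u*(p*e) := by rw [hband]
    _ = e := by rw [← mul_assoc]; exact ha
end

section
/- Let M be a finite monoid and ⊑ a partial order on M satisfying: (C1) for all x, y ∈ M, x ⊏ y implies x ≤_L y; and (C4) for all x, y, x', y' ∈ M, if x ⊑ y, x R x', and y R y', then x' ⊑ y'. For m ∈ M let k_m denote the ⊑-height of m, i.e. the maximal n ≥ 1 such that there exists a strictly ⊑-decreasing chain m = m_1 ⊐ m_2 ⊐ ⋯ ⊐ m_n in M. Then for all m, m' ∈ M, if m R m' then k_m = k_{m'}. -/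
/-- Green's `L`-preorder: `x ≤_L y` iff `x = z * y` for some `z`. -/
def leL {M : Type*} [Monoid M] (x y : M) : Prop := ∃ z : M, x = z * y

/-- Green's `R`-preorder: `x ≤_R y` iff `x = y * z` for some `z`. -/
def leR {M : Type*} [Monoid M] (x y : M) : Prop := ∃ z : M, x = y * z

/-- Green's `R`-equivalence. -/
def rR {M : Type*} [Monoid M] (x y : M) : Prop := leR x y ∧ leR y x

/-- The `⊑`-height of `m`: the maximal `n ≥ 1` such that there exists a strictly
`⊑`-decreasing chain `m = m₁ ⊐ m₂ ⊐ ⋯ ⊐ mₙ` in `M`. -/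
noncomputable def sqHeight {M : Type*} (sq : M → M → Prop) (m : M) : ℕ :=
  sSup {n : ℕ | 1 ≤ n ∧ ∃ c : ℕ → M, c 0 = m ∧
    ∀ i j : ℕ, i < j → j < n → sq (c j) (c i) ∧ c j ≠ c i}

/-- Let `M` be a finite monoid and `⊑` (written `sq`) a partial order on `M` with
(C1) `x ⊏ y` implies `x ≤_L y`, and
(C4) `x ⊑ y`, `x R x'`, `y R y'` imply `x' ⊑ y'`.
Then `R`-equivalent elements have equal `⊑`-height. -/
theorem R_equiv_height_eq {M : Type*} [Monoid M] [Finite M] (sq : M → M → Prop)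
    (hrefl : ∀ x : M, sq x x)
    (hantisymm : ∀ x y : M, sq x y → sq y x → x = y)
    (htrans : ∀ x y z : M, sq x y → sq y z → sq x z)
    (hC1 : ∀ x y : M, sq x y ∧ x ≠ y → leL x y)
    (hC4 : ∀ x y x' y' : M, sq x y → rR x x' → rR y y' → sq x' y') :
    ∀ m m' : M, rR m m' → sqHeight sq m = sqHeight sq m' := by
  set S : M → Set ℕ := fun m => {n : ℕ | 1 ≤ n ∧ ∃ c : ℕ → M, c 0 = m ∧
    ∀ i j : ℕ, i < j → j < n → sq (c j) (c i) ∧ c j ≠ c i} with hS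
  have hne : ∀ m : M, (S m).Nonempty := by
    intro m
    exact ⟨1, le_refl 1, fun _ => m, rfl, by omega⟩
  have hbdd : ∀ m : M, BddAbove (S m) := by
    intro m
    refine ⟨Nat.card M, ?_⟩
    rintro n ⟨-, c, -, hc⟩
    by_contra h
    push_neg at h
    have hinj : Function.Injective (fun i : Fin n => c i) := by
      intro i j hij
      by_contra hne
      rcases lt_or_gt_of_ne (fun h : (i : ℕ) = j => hne (Fin.ext h)) with hlt | hlt
      · exact (hc i j hlt j.isLt).2 hij.symm
      · exact (hc j i hlt i.isLt).2 hij
    have := Nat.card_le_card_of_injective _ hinj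
    simp [Nat.card_eq_fintype_card] at this
    omega
  have key : ∀ m m' : M, rR m m' → S m ⊆ S m' := by
    rintro m m' ⟨⟨v, hv⟩, ⟨u, hu⟩⟩ n ⟨hn, c, hc0, hc⟩
    -- m = m' * v, m' = m * u
    refine ⟨hn, fun i => c i * u, show c 0 * u = m' by rw [hc0, hu], ?_⟩
    intro i j hij hjn
    have hfix : ∀ i : ℕ, i < n → c i * u * v = c i := by
      intro i hin
      rcases Nat.eq_zero_or_pos i with rfl | hi
      · rw [hc0, ← hu, ← hv]
      · obtain ⟨hsq, hne'⟩ := hc 0 i hi hin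
        obtain ⟨z, hz⟩ := hC1 _ _ ⟨hsq, hne'⟩
        rw [hz, hc0, mul_assoc z m u, ← hu, mul_assoc, ← hv]
    have hR : ∀ i : ℕ, i < n → rR (c i) (c i * u) := by
      intro i hin
      exact ⟨⟨v, (hfix i hin).symm⟩, ⟨u, rfl⟩⟩
    obtain ⟨hsq, hne'⟩ := hc i j hij hjn
    refine ⟨hC4 _ _ _ _ hsq (hR j hjn) (hR i (hij.trans hjn)), ?_⟩
    intro he
    have he' : c j * u = c i * u := he
    apply hne'
    rw [← hfix j hjn, ← hfix i (hij.trans hjn), he']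
  intro m m' hmm'
  have h1 := csSup_le_csSup (hbdd m') (hne m) (key m m' hmm')
  have h2 := csSup_le_csSup (hbdd m) (hne m') (key m' m ⟨hmm'.2, hmm'.1⟩)
  exact le_antisymm h1 h2
end

section
/- Let M be a finite linear band (a finite monoid with x*x = x for all x, and x*y*x = x or y*x*y = y for all x, y), and let ⊑ be a partial order on M satisfying: (C1) x ⊏ y implies x ≤_L y; (C3) x <_L y implies x ⊏ y, and if x L y with x ≠ y then x ⊏ y or y ⊏ x; and (C4) if x ⊑ y, x R x', and y R y', then x' ⊑ y'. For m ∈ M let k_m denote the ⊑-height of m. Then for all m_1, m_2, m ∈ M: if m_1 ⊏ m_2 and k_{m_1*m} < k_{m_1}, then k_{m_2*m} < k_{m_1} < k_{m_2}. -/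
/-- The set of chain lengths below `m`. -/
def chainSet {M : Type*} (sq : M → M → Prop) (m : M) : Set ℕ :=
  {n : ℕ | 1 ≤ n ∧ ∃ c : ℕ → M, c 0 = m ∧
    ∀ i j : ℕ, i < j → j < n → sq (c j) (c i) ∧ c j ≠ c i}

lemma sqHeight_eq_sSup {M : Type*} (sq : M → M → Prop) (m : M) :
    sqHeight sq m = sSup (chainSet sq m) := rfl

lemma chainSet_bddAbove {M : Type*} [Finite M] (sq : M → M → Prop) (m : M) :
    BddAbove (chainSet sq m) := by
  refine ⟨Nat.card M, fun n hn => ?_⟩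
  obtain ⟨hn1, c, hc0, hc⟩ := hn
  have hinj : Function.Injective (fun i : Fin n => c i) := by
    intro i j hij
    by_contra hne
    rcases lt_or_gt_of_ne (fun h : (i : ℕ) = (j : ℕ) => hne (Fin.ext h)) with h | h
    · exact (hc i j h j.2).2 hij.symm
    · exact (hc j i h i.2).2 hij
  have := Nat.card_le_card_of_injective _ hinj
  simpa using this

lemma chainSet_nonempty {M : Type*} (sq : M → M → Prop)
    (hrefl : ∀ x : M, sq x x) (m : M) : (chainSet sq m).Nonempty := by
  refine ⟨1, le_refl 1, fun _ => m, rfl, fun i j hij hj => ?_⟩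
  omega

lemma sqHeight_mem {M : Type*} [Finite M] (sq : M → M → Prop)
    (hrefl : ∀ x : M, sq x x) (m : M) : sqHeight sq m ∈ chainSet sq m := by
  rw [sqHeight_eq_sSup]
  exact Nat.sSup_mem (chainSet_nonempty sq hrefl m) (chainSet_bddAbove sq m)

/-- If `a ⊏ b` then the height of `a` is strictly less than that of `b`. -/
lemma sqHeight_lt {M : Type*} [Finite M] (sq : M → M → Prop)
    (hrefl : ∀ x : M, sq x x)
    (hantisymm : ∀ x y : M, sq x y → sq y x → x = y)
    (htrans : ∀ x y z : M, sq x y → sq y z → sq x z)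
    {a b : M} (hab : sq a b) (hne : a ≠ b) :
    sqHeight sq a < sqHeight sq b := by
  obtain ⟨h1, c, hc0, hc⟩ := sqHeight_mem sq hrefl a
  set h := sqHeight sq a with hh
  have hmem : h + 1 ∈ chainSet sq b := by
    refine ⟨by omega, fun n => if n = 0 then b else c (n - 1), by simp, ?_⟩
    intro i j hij hjh
    have hj0 : j ≠ 0 := by omega
    simp only [hj0, if_false]
    -- key fact about c (j-1)
    have hkey : sq (c (j - 1)) b ∧ c (j - 1) ≠ b := by
      by_cases hj1 : j = 1
      · subst hj1; simpa [hc0] using ⟨hab, hne⟩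
      · have hchain := hc 0 (j - 1) (by omega) (by omega)
        rw [hc0] at hchain
        have hsqb : sq (c (j - 1)) b := htrans _ _ _ hchain.1 hab
        refine ⟨hsqb, fun hEq => ?_⟩
        rw [hEq] at hchain
        exact hne (hantisymm _ _ hab hchain.1)
    by_cases hi0 : i = 0
    · simpa [hi0] using hkey
    · simp only [hi0, if_false]
      exact hc (i - 1) (j - 1) (by omega) (by omega)
  have hle : h + 1 ≤ sqHeight sq b := by
    rw [sqHeight_eq_sSup]
    exact le_csSup (chainSet_bddAbove sq b) hmem
  omega

/-- Let `M` be a finite linear band and `⊑` (written `sq`) a partial order on `M`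
satisfying (C1), (C3) and (C4). Then for all `m₁ m₂ m : M`: if `m₁ ⊏ m₂` and
`k_{m₁*m} < k_{m₁}`, then `k_{m₂*m} < k_{m₁} < k_{m₂}`. -/
theorem linearBand_height_ordered {M : Type*} [Monoid M] [Finite M]
    (hband : ∀ x : M, x * x = x)
    (hlin : ∀ x y : M, x * y * x = x ∨ y * x * y = y)
    (sq : M → M → Prop)
    (hrefl : ∀ x : M, sq x x)
    (hantisymm : ∀ x y : M, sq x y → sq y x → x = y)
    (htrans : ∀ x y z : M, sq x y → sq y z → sq x z)
    (hC1 : ∀ x y : M, sq x y ∧ x ≠ y → leL x y)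
    (hC3₁ : ∀ x y : M, leL x y ∧ ¬ leL y x → sq x y ∧ x ≠ y)
    (hC3₂ : ∀ x y : M, leL x y → leL y x → x ≠ y →
      (sq x y ∧ x ≠ y) ∨ (sq y x ∧ y ≠ x))
    (hC4 : ∀ x y x' y' : M, sq x y → rR x x' → rR y y' → sq x' y') :
    ∀ m₁ m₂ m : M, sq m₁ m₂ ∧ m₁ ≠ m₂ → sqHeight sq (m₁ * m) < sqHeight sq m₁ →
      sqHeight sq (m₂ * m) < sqHeight sq m₁ ∧ sqHeight sq m₁ < sqHeight sq m₂ := by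
  intro m₁ m₂ m ⟨hsq12, hne12⟩ hk
  -- second conclusion is immediate
  have hright : sqHeight sq m₁ < sqHeight sq m₂ :=
    sqHeight_lt sq hrefl hantisymm htrans hsq12 hne12
  -- m₁ * m₂ = m₁ (from C1)
  have h12 : m₁ * m₂ = m₁ := by
    obtain ⟨z, hz⟩ := hC1 m₁ m₂ ⟨hsq12, hne12⟩
    calc m₁ * m₂ = z * m₂ * m₂ := by rw [← hz]
    _ = z * (m₂ * m₂) := by rw [mul_assoc]
    _ = z * m₂ := by rw [hband]
    _ = m₁ := hz.symm
  -- m₁ * m ≠ m₁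
  have hne1m : m₁ * m ≠ m₁ := by
    intro hEq
    rw [hEq] at hk
    exact lt_irrefl _ hk
  -- m₁ * m * m₁ ≠ m₁
  have hkey : m₁ * m * m₁ ≠ m₁ := by
    intro hEq
    -- then m₁ R m₁ * m, and C4 forces m₁ * m = m₁
    have hR : rR m₁ (m₁ * m) := ⟨⟨m₁, hEq.symm⟩, ⟨m, rfl⟩⟩
    have h1 : sq (m₁ * m) m₁ := hC4 m₁ m₁ (m₁ * m) m₁ (hrefl m₁) hR ⟨⟨1, (mul_one m₁).symm⟩, ⟨1, (mul_one m₁).symm⟩⟩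
    have h2 : sq m₁ (m₁ * m) := hC4 m₁ m₁ m₁ (m₁ * m) (hrefl m₁) ⟨⟨1, (mul_one m₁).symm⟩, ⟨1, (mul_one m₁).symm⟩⟩ hR
    exact hne1m (hantisymm _ _ h1 h2)
  -- linearity applied to (m₂ * m) and m₁
  have hlin' : m₂ * m * m₁ * (m₂ * m) = m₂ * m := by
    rcases hlin (m₂ * m) m₁ with h | h
    · exact h
    · exfalso
      apply hkey
      calc m₁ * m * m₁ = m₁ * m₂ * m * m₁ := by rw [h12]
      _ = m₁ * (m₂ * m) * m₁ := by rw [mul_assoc m₁ m₂ m]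
      _ = m₁ := h
  set c := m₂ * m * m₁ with hc
  -- c <_L m₁
  have hcL : leL c m₁ := ⟨m₂ * m, rfl⟩
  have hnL : ¬ leL m₁ c := by
    rintro ⟨z, hz⟩
    apply hkey
    have hzc : m₁ * c = m₁ := by
      calc m₁ * c = z * c * c := by rw [← hz]
      _ = z * (c * c) := by rw [mul_assoc]
      _ = z * c := by rw [hband]
      _ = m₁ := hz.symm
    calc m₁ * m * m₁ = m₁ * m₂ * m * m₁ := by rw [h12]
    _ = m₁ * (m₂ * m * m₁) := by rw [mul_assoc, mul_assoc, mul_assoc]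
    _ = m₁ := hzc
  obtain ⟨hsqc, hnec⟩ := hC3₁ c m₁ ⟨hcL, hnL⟩
  -- c R m₂ * m
  have hRc : rR c (m₂ * m) := ⟨⟨m₁, rfl⟩, ⟨m₂ * m, hlin'.symm⟩⟩
  -- C4: m₂ * m ⊑ m₁
  have hfinal : sq (m₂ * m) m₁ :=
    hC4 c m₁ (m₂ * m) m₁ hsqc hRc ⟨⟨1, (mul_one m₁).symm⟩, ⟨1, (mul_one m₁).symm⟩⟩
  have hnefinal : m₂ * m ≠ m₁ := by
    intro hEq
    apply hne1m
    calc m₁ * m = m₂ * m * m := by rw [hEq]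
    _ = m₂ * (m * m) := by rw [mul_assoc]
    _ = m₂ * m := by rw [hband]
    _ = m₁ := hEq
  exact ⟨sqHeight_lt sq hrefl hantisymm htrans hfinal hnefinal, hright⟩
end

section
/- Let M be a finite linear band (a finite monoid with x*x = x for all x, and x*y*x = x or y*x*y = y for all x, y). Then for all m_1, m ∈ M: if m_1*m <_J m_1 (i.e. it is not the case that m_1 ≤_J m_1*m), then m <_J m_1 (i.e. m ≤_J m_1 and not m_1 ≤_J m). -/
/-- In a finite linear band, if `m₁*m <_J m₁` then `m <_J m₁`. -/
theorem linearBand_strict_J_drop {M : Type*} [Monoid M] [Finite M]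
    (hband : ∀ x : M, x * x = x)
    (hlin : ∀ x y : M, x * y * x = x ∨ y * x * y = y) :
    ∀ m₁ m : M, (leJ (m₁ * m) m₁ ∧ ¬ leJ m₁ (m₁ * m)) →
      (leJ m m₁ ∧ ¬ leJ m₁ m) := by
  intro m₁ m ⟨_, hnot⟩
  rcases hlin m₁ m with h | h
  · exact absurd ⟨1, m₁, by rw [one_mul, h]⟩ hnot
  · refine ⟨⟨m, m, h.symm⟩, ?_⟩
    rintro ⟨u, v, huv⟩
    apply hnot
    refine ⟨u * m, v, ?_⟩
    calc m₁ = u * m * v := huv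
      _ = u * (m * m₁ * m) * v := by rw [h]
      _ = u * m * (m₁ * m) * v := by simp [mul_assoc]
end
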